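/- arXiv:1809.06051 — 2 statements merged into one kernel-verified Lean document; each statement's English description precedes it below -/
import Mathlib

section
/- Let Φ = {φ_i}_{i∈I} and Ψ = {ψ_i}_{i∈I} be (ordinary) Bessel sequences in H. For each i set W_i := span{ψ_i}, V_i := span{φ_i}, ω_i := ‖ψ_i‖, υ_i := ‖φ_i‖, and define R_i ∈ B(H) by R_i x := ⟨x, ψ_i/‖ψ_i‖⟩ φ_i/‖φ_i‖ when φ_i ≠ 0 and ψ_i ≠ 0, and R_i := 0 otherwise. Then (W,ω) and (V,υ) are Bessel fusion sequences, R = {R_i} ∈ ℓ∞(I,B(H)) with ‖R_i‖ ≤ 1, and for every m ∈ ℓ∞(I) and every x ∈ H one has M_{mR,V,W} x = Σ_{i∈I} m_i ⟨x, ψ_i⟩ φ_i; that is, the (m,R)-Bessel fusion multiplier equals the ordinary Bessel multiplier M_{m,Φ,Ψ}. -/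
/-!
Each `W_i = span{ψ_i}` is a line, onto which the projection is `x ↦ (⟪ψ_i, x⟫ / ‖ψ_i‖²) ψ_i`;
hence `ω_i² ‖P_{W_i} x‖² = |⟪x, ψ_i⟫|²` and the fusion Bessel sums are the ordinary ones.
`R_i` is the rank-one operator `ψ̂_i ⊗ φ̂_i` of the normalized vectors, so it has norm at most `1`,
its range lies in `V_i`, and it only sees the `W_i`-component of its argument. Therefore
`P_{V_i} R_i P_{W_i} = R_i`, and `υ_i ω_i R_i x = ⟪ψ_i, x⟫ φ_i`.
-/

noncomputable section

open ContinuousLinearMap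
open scoped Classical

/-- Orthogonal projection onto a closed subspace, as an operator on `H`. -/
def fproj {H : Type*} [NormedAddCommGroup H] [InnerProductSpace ℂ H] [CompleteSpace H]
    (W : Submodule ℂ H) (hW : IsClosed (W : Set H)) : H →L[ℂ] H :=
  haveI : CompleteSpace W := hW.completeSpace_coe
  W.subtypeL.comp W.orthogonalProjection

open InnerProductSpace

section

variable {H : Type*} [NormedAddCommGroup H] [InnerProductSpace ℂ H]

def normalizedRankOne (φ ψ : H) : H →L[ℂ] H :=
  if φ ≠ 0 ∧ ψ ≠ 0 then rankOne ℂ (‖φ‖⁻¹ • φ) (‖ψ‖⁻¹ • ψ) else 0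

theorem norm_normalizedRankOne_le (φ ψ : H) : ‖normalizedRankOne φ ψ‖ ≤ 1 := by
  unfold normalizedRankOne
  split_ifs with h
  · rw [norm_rankOne, norm_smul, norm_smul, norm_inv, norm_norm, norm_inv, norm_norm,
      inv_mul_cancel₀ (norm_ne_zero_iff.2 h.1), inv_mul_cancel₀ (norm_ne_zero_iff.2 h.2), one_mul]
  · simp

theorem normalizedRankOne_apply_mem (φ ψ x : H) : normalizedRankOne φ ψ x ∈ ℂ ∙ φ := by
  unfold normalizedRankOne
  split_ifs
  · exact Submodule.smul_mem _ _
      (Submodule.smul_of_tower_mem _ _ (Submodule.mem_span_singleton_self φ))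
  · exact Submodule.zero_mem _

theorem norm_mul_norm_smul_normalizedRankOne_apply (φ ψ x : H) :
    (‖φ‖ * ‖ψ‖) • normalizedRankOne φ ψ x = inner ℂ ψ x • φ := by
  unfold normalizedRankOne
  split_ifs with h
  · have hφ : (‖φ‖ : ℂ) ≠ 0 := by exact_mod_cast norm_ne_zero_iff.2 h.1
    have hψ : (‖ψ‖ : ℂ) ≠ 0 := by exact_mod_cast norm_ne_zero_iff.2 h.2
    simp only [rankOne_apply, RCLike.real_smul_eq_coe_smul (K := ℂ), inner_smul_left,
      smul_smul, map_inv₀, Complex.coe_algebraMap, Complex.conj_ofReal]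
    congr 1
    field_simp
    push_cast
    ring
  · rcases not_and_or.1 h with hφ | hψ <;> simp_all

variable [CompleteSpace H]

theorem fproj_eq_starProjection (W : Submodule ℂ H) (hW : IsClosed (W : Set H))
    [CompleteSpace W] : fproj W hW = W.starProjection :=
  rfl

theorem fproj_apply_of_mem {W : Submodule ℂ H} (hW : IsClosed (W : Set H)) {v : H}
    (hv : v ∈ W) : fproj W hW v = v := by
  have := hW.completeSpace_coe
  rw [fproj_eq_starProjection, Submodule.starProjection_eq_self_iff]
  exact hv

theorem inner_fproj_right_of_mem {W : Submodule ℂ H} (hW : IsClosed (W : Set H)) {v : H}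
    (hv : v ∈ W) (x : H) : inner ℂ v (fproj W hW x) = inner ℂ v x := by
  have := hW.completeSpace_coe
  rw [fproj_eq_starProjection, ← Submodule.inner_starProjection_left_eq_right,
    Submodule.starProjection_eq_self_iff.2 hv]

theorem fproj_span_singleton_apply (v : H) (hW : IsClosed ((ℂ ∙ v : Submodule ℂ H) : Set H))
    (x : H) : fproj (ℂ ∙ v) hW x = (inner ℂ v x / ((‖v‖ ^ 2 : ℝ) : ℂ)) • v := by
  have := hW.completeSpace_coe
  rw [fproj_eq_starProjection]
  exact Submodule.starProjection_singleton (𝕜 := ℂ) x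

theorem sq_norm_mul_sq_norm_fproj_span_singleton (v : H)
    (hW : IsClosed ((ℂ ∙ v : Submodule ℂ H) : Set H)) (x : H) :
    ‖v‖ ^ 2 * ‖fproj (ℂ ∙ v) hW x‖ ^ 2 = ‖inner ℂ x v‖ ^ 2 := by
  rcases eq_or_ne v 0 with rfl | hv
  · simp
  have hv' : ‖v‖ ≠ 0 := norm_ne_zero_iff.2 hv
  rw [fproj_span_singleton_apply, norm_smul, norm_div, norm_inner_symm, Complex.norm_real,
    Real.norm_of_nonneg (by positivity)]
  field_simp

theorem besselFusion_span_singleton {I : Type*} (f : I → H) (β : ℝ)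
    (hf : ∀ x : H, ∃ s : ℝ, HasSum (fun i => ‖inner ℂ x (f i)‖ ^ 2) s ∧ s ≤ β * ‖x‖ ^ 2)
    (hW : ∀ i, IsClosed ((ℂ ∙ f i : Submodule ℂ H) : Set H)) (x : H) :
    ∃ s : ℝ, HasSum (fun i => ‖f i‖ ^ 2 * ‖fproj (ℂ ∙ f i) (hW i) x‖ ^ 2) s ∧ s ≤ β * ‖x‖ ^ 2 := by
  simpa only [sq_norm_mul_sq_norm_fproj_span_singleton] using hf x

theorem normalizedRankOne_fproj (φ ψ : H) (hW : IsClosed ((ℂ ∙ ψ : Submodule ℂ H) : Set H))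
    (x : H) : normalizedRankOne φ ψ (fproj (ℂ ∙ ψ) hW x) = normalizedRankOne φ ψ x := by
  unfold normalizedRankOne
  split_ifs
  · rw [rankOne_apply, rankOne_apply, inner_fproj_right_of_mem hW
      (Submodule.smul_of_tower_mem _ _ (Submodule.mem_span_singleton_self ψ))]
  · rfl

theorem norm_mul_norm_smul_fproj_normalizedRankOne_fproj (φ ψ : H)
    (hV : IsClosed ((ℂ ∙ φ : Submodule ℂ H) : Set H))
    (hW : IsClosed ((ℂ ∙ ψ : Submodule ℂ H) : Set H)) (x : H) :
    (‖φ‖ * ‖ψ‖) • fproj (ℂ ∙ φ) hV (normalizedRankOne φ ψ (fproj (ℂ ∙ ψ) hW x))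
      = inner ℂ ψ x • φ := by
  rw [fproj_apply_of_mem hV (normalizedRankOne_apply_mem φ ψ _), normalizedRankOne_fproj,
    norm_mul_norm_smul_normalizedRankOne_apply]

end

theorem besselFusionMultiplier_of_ordinary_bessel_general
    {H : Type*} [NormedAddCommGroup H] [InnerProductSpace ℂ H] [CompleteSpace H]
    {I : Type*}
    (Φ Ψ : I → H) (βΦ βΨ : ℝ)
    (hΦ : ∀ x : H, ∃ s : ℝ, HasSum (fun i => ‖(inner ℂ x (Φ i) : ℂ)‖ ^ 2) s ∧ s ≤ βΦ * ‖x‖ ^ 2)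
    (hΨ : ∀ x : H, ∃ s : ℝ, HasSum (fun i => ‖(inner ℂ x (Ψ i) : ℂ)‖ ^ 2) s ∧ s ≤ βΨ * ‖x‖ ^ 2)
    (W V : I → Submodule ℂ H) (ω υ : I → ℝ)
    (hWdef : ∀ i, W i = Submodule.span ℂ {Ψ i}) (hVdef : ∀ i, V i = Submodule.span ℂ {Φ i})
    (hW : ∀ i, IsClosed ((W i) : Set H)) (hV : ∀ i, IsClosed ((V i) : Set H))
    (hωdef : ∀ i, ω i = ‖Ψ i‖) (hυdef : ∀ i, υ i = ‖Φ i‖)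
    (R : I → H →L[ℂ] H)
    (hRdef : ∀ i, R i = if _h : Φ i ≠ 0 ∧ Ψ i ≠ 0 then
      (innerSL ℂ (‖Ψ i‖⁻¹ • Ψ i)).smulRight (‖Φ i‖⁻¹ • Φ i) else 0) :
    -- (W,ω) and (V,υ) are fusion sequences and Bessel fusion sequences
    (∀ i, 0 ≤ ω i ∧ (ω i = 0 ↔ W i = ⊥)) ∧
    (∀ i, 0 ≤ υ i ∧ (υ i = 0 ↔ V i = ⊥)) ∧
    (∀ x : H, ∃ s : ℝ,
      HasSum (fun i => ω i ^ 2 * ‖fproj (W i) (hW i) x‖ ^ 2) s ∧ s ≤ βΨ * ‖x‖ ^ 2) ∧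
    (∀ x : H, ∃ s : ℝ,
      HasSum (fun i => υ i ^ 2 * ‖fproj (V i) (hV i) x‖ ^ 2) s ∧ s ≤ βΦ * ‖x‖ ^ 2) ∧
    -- R ∈ ℓ∞(I,B(H)) with ‖R_i‖ ≤ 1
    (∀ i, ‖R i‖ ≤ 1) ∧
    -- the (m,R)-fusion multiplier coincides with the ordinary multiplier, termwise and as a sum
    (∀ m : I → ℂ, ∀ x : H, ∀ i : I,
      m i • (υ i * ω i) • fproj (V i) (hV i) ((R i) (fproj (W i) (hW i) x))
        = m i • (inner ℂ (Ψ i) x : ℂ) • Φ i) ∧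
    (∀ m : I → ℂ, ∀ x : H,
      ∑' i, m i • (υ i * ω i) • fproj (V i) (hV i) ((R i) (fproj (W i) (hW i) x))
        = ∑' i, m i • (inner ℂ (Ψ i) x : ℂ) • Φ i) := by
  obtain rfl : W = fun i => ℂ ∙ Ψ i := funext hWdef
  obtain rfl : V = fun i => ℂ ∙ Φ i := funext hVdef
  obtain rfl : ω = fun i => ‖Ψ i‖ := funext hωdef
  obtain rfl : υ = fun i => ‖Φ i‖ := funext hυdef
  obtain rfl : R = fun i => normalizedRankOne (Φ i) (Ψ i) := funext hRdef
  have fusion_term (m : I → ℂ) (x : H) (i : I) :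
      m i • (‖Φ i‖ * ‖Ψ i‖) • fproj _ (hV i) (normalizedRankOne (Φ i) (Ψ i) (fproj _ (hW i) x))
        = m i • inner ℂ (Ψ i) x • Φ i := by
    rw [norm_mul_norm_smul_fproj_normalizedRankOne_fproj]
  refine ⟨fun i => ⟨norm_nonneg _, ?_⟩, fun i => ⟨norm_nonneg _, ?_⟩,
    besselFusion_span_singleton Ψ βΨ hΨ hW, besselFusion_span_singleton Φ βΦ hΦ hV,
    fun i => norm_normalizedRankOne_le _ _, fusion_term,
    fun m x => tsum_congr (fusion_term m x)⟩ <;>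
  exact norm_eq_zero.trans Submodule.span_singleton_eq_bot.symm

/-- (m,R)-Bessel fusion multipliers generalize ordinary Bessel multipliers.
Given Bessel sequences `Φ, Ψ`, with `W_i = span{ψ_i}`, `V_i = span{φ_i}`, `ω_i = ‖ψ_i‖`,
`υ_i = ‖φ_i‖` and the rank-one operators `R_i x = ⟨x, ψ_i/‖ψ_i‖⟩ φ_i/‖φ_i‖` (and `R_i = 0`
if `φ_i = 0` or `ψ_i = 0`), the fusion sequences `(W,ω)` and `(V,υ)` are Bessel fusion
sequences, `‖R_i‖ ≤ 1`, and the multiplier `M_{mR,V,W}` coincides (termwise, hence as a sum)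
with the ordinary Bessel multiplier `x ↦ Σ_i m_i ⟨x,ψ_i⟩ φ_i`. -/
theorem besselFusionMultiplier_of_ordinary_bessel
    {H : Type*} [NormedAddCommGroup H] [InnerProductSpace ℂ H] [CompleteSpace H]
    [TopologicalSpace.SeparableSpace H]
    {I : Type*} [Countable I]
    (Φ Ψ : I → H) (βΦ βΨ : ℝ)
    (hΦ : ∀ x : H, ∃ s : ℝ, HasSum (fun i => ‖(inner ℂ x (Φ i) : ℂ)‖ ^ 2) s ∧ s ≤ βΦ * ‖x‖ ^ 2)
    (hΨ : ∀ x : H, ∃ s : ℝ, HasSum (fun i => ‖(inner ℂ x (Ψ i) : ℂ)‖ ^ 2) s ∧ s ≤ βΨ * ‖x‖ ^ 2)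
    (W V : I → Submodule ℂ H) (ω υ : I → ℝ)
    (hWdef : ∀ i, W i = Submodule.span ℂ {Ψ i}) (hVdef : ∀ i, V i = Submodule.span ℂ {Φ i})
    (hW : ∀ i, IsClosed ((W i) : Set H)) (hV : ∀ i, IsClosed ((V i) : Set H))
    (hωdef : ∀ i, ω i = ‖Ψ i‖) (hυdef : ∀ i, υ i = ‖Φ i‖)
    (R : I → H →L[ℂ] H)
    (hRdef : ∀ i, R i = if _h : Φ i ≠ 0 ∧ Ψ i ≠ 0 then
      (innerSL ℂ (‖Ψ i‖⁻¹ • Ψ i)).smulRight (‖Φ i‖⁻¹ • Φ i) else 0) :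
    -- (W,ω) and (V,υ) are fusion sequences and Bessel fusion sequences
    (∀ i, 0 ≤ ω i ∧ (ω i = 0 ↔ W i = ⊥)) ∧
    (∀ i, 0 ≤ υ i ∧ (υ i = 0 ↔ V i = ⊥)) ∧
    (∀ x : H, ∃ s : ℝ,
      HasSum (fun i => ω i ^ 2 * ‖fproj (W i) (hW i) x‖ ^ 2) s ∧ s ≤ βΨ * ‖x‖ ^ 2) ∧
    (∀ x : H, ∃ s : ℝ,
      HasSum (fun i => υ i ^ 2 * ‖fproj (V i) (hV i) x‖ ^ 2) s ∧ s ≤ βΦ * ‖x‖ ^ 2) ∧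
    -- R ∈ ℓ∞(I,B(H)) with ‖R_i‖ ≤ 1
    (∀ i, ‖R i‖ ≤ 1) ∧
    -- the (m,R)-fusion multiplier coincides with the ordinary multiplier, termwise and as a sum
    (∀ m : I → ℂ, ∀ x : H, ∀ i : I,
      m i • (υ i * ω i) • fproj (V i) (hV i) ((R i) (fproj (W i) (hW i) x))
        = m i • (inner ℂ (Ψ i) x : ℂ) • Φ i) ∧
    (∀ m : I → ℂ, ∀ x : H,
      ∑' i, m i • (υ i * ω i) • fproj (V i) (hV i) ((R i) (fproj (W i) (hW i) x))
        = ∑' i, m i • (inner ℂ (Ψ i) x : ℂ) • Φ i) :=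
  besselFusionMultiplier_of_ordinary_bessel_general Φ Ψ βΦ βΨ hΦ hΨ W V ω υ hWdef hVdef hW hV hωdef
    hυdef R hRdef
end
end

section
/- Let A = {A_i}_{i∈I} be an operator-valued frame of bounded operators H → K. If B = {B_i}_{i∈I} is an operator-valued Bessel sequence of operators H → K such that T*_B(T_A S_A^{-1} + L) = 0 for every L ∈ L_A := {L ∈ B(H,𝔎) : L*T_A = 0}, then B_i = 0 for all i ∈ I. -/
/-!
Taking `L = 0` gives `T_B* T_A S_A⁻¹ = 0`, hence `T_B* T_A = 0` since `S_A⁻¹` is onto. So `T_B` itself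
lies in `L_A`, and the hypothesis for `L = T_B` leaves `T_B* T_B = 0`, i.e. `T_B = 0`.
-/

open ContinuousLinearMap

namespace ContinuousLinearMap

theorem eq_zero_of_comp_eq_zero_of_comp_eq_one {R E G : Type*} [Semiring R]
    [TopologicalSpace E] [AddCommMonoid E] [Module R E]
    [TopologicalSpace G] [AddCommMonoid G] [Module R G] {X : E →L[R] G} {P S : E →L[R] E}
    (hX : X ∘L P = 0) (hPS : P ∘L S = 1) : X = 0 := by
  calc X = X ∘L (P ∘L S) := by rw [hPS, one_def, comp_id]
    _ = 0 := by rw [← comp_assoc, hX, zero_comp]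

variable {𝕜 E F : Type*} [RCLike 𝕜]
variable [NormedAddCommGroup E] [InnerProductSpace 𝕜 E] [CompleteSpace E]
  [NormedAddCommGroup F] [InnerProductSpace 𝕜 F] [CompleteSpace F]

theorem eq_zero_of_forall_adjoint_comp_dual_eq_zero {T U : E →L[𝕜] F} {Sinv : E →L[𝕜] E}
    (hSinv : Sinv ∘L (adjoint T ∘L T) = 1)
    (hOrth : ∀ L : E →L[𝕜] F, adjoint L ∘L T = 0 → adjoint U ∘L (T ∘L Sinv + L) = 0) :
    U = 0 := by
  have hUTSinv : adjoint U ∘L T ∘L Sinv = 0 := by simpa using hOrth 0 (by simp)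
  have hUT : adjoint U ∘L T = 0 :=
    eq_zero_of_comp_eq_zero_of_comp_eq_one (by rwa [comp_assoc]) hSinv
  have hUU : adjoint U ∘L U = 0 := by
    simpa [comp_add, hUTSinv] using hOrth U hUT
  exact adjoint_comp_self_eq_zero_iff.mp hUU

end ContinuousLinearMap

theorem operatorValuedBessel_orthogonal_to_all_duals_eq_zero_general
    {H K : Type*} [NormedAddCommGroup H] [InnerProductSpace ℂ H] [CompleteSpace H]
    [NormedAddCommGroup K] [InnerProductSpace ℂ K] [CompleteSpace K]
    {I : Type*}
    -- the analysis operator of A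
    (T : H →L[ℂ] lp (fun _ : I => K) 2)
    -- the frame operator S_A = T_A* T_A and its inverse
    (Sinv : H →L[ℂ] H)
    (hSinv : (ContinuousLinearMap.adjoint T ∘L T) ∘L Sinv = 1 ∧
             Sinv ∘L (ContinuousLinearMap.adjoint T ∘L T) = 1)
    -- B is an operator-valued Bessel sequence with analysis operator TB
    (B : I → H →L[ℂ] K)
    (TB : H →L[ℂ] lp (fun _ : I => K) 2)
    (hTB : ∀ (x : H) (i : I), TB x i = B i x)
    -- TB* (T S⁻¹ + L) = 0 for every L ∈ L_A
    (hOrth : ∀ L : H →L[ℂ] lp (fun _ : I => K) 2,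
      ContinuousLinearMap.adjoint L ∘L T = 0 →
      ContinuousLinearMap.adjoint TB ∘L (T ∘L Sinv + L) = 0) :
    ∀ i, B i = 0 := by
  have hTB0 : TB = 0 := eq_zero_of_forall_adjoint_comp_dual_eq_zero hSinv.2 hOrth
  intro i
  ext x
  rw [← hTB, hTB0]
  rfl

/-- Let `A` be an operator-valued frame with analysis operator `T`, frame
operator `S = T*T` (with inverse `Sinv`). If `B` is an operator-valued Bessel sequence
(with analysis operator `TB`) such that `TB* (T S⁻¹ + L) = 0` for every
`L ∈ L_A = {L : adjoint L ∘ T = 0}`, then `B_i = 0` for all `i`. -/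
theorem operatorValuedBessel_orthogonal_to_all_duals_eq_zero
    {H K : Type*} [NormedAddCommGroup H] [InnerProductSpace ℂ H] [CompleteSpace H]
    [NormedAddCommGroup K] [InnerProductSpace ℂ K] [CompleteSpace K]
    [TopologicalSpace.SeparableSpace H] [TopologicalSpace.SeparableSpace K]
    {I : Type*} [Countable I]
    (A : I → H →L[ℂ] K)
    (α β : ℝ) (hα : 0 < α)
    (hframe : ∀ x : H, ∃ s : ℝ,
      HasSum (fun i => ‖A i x‖ ^ 2) s ∧ α * ‖x‖ ^ 2 ≤ s ∧ s ≤ β * ‖x‖ ^ 2)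
    -- the analysis operator of A
    (T : H →L[ℂ] lp (fun _ : I => K) 2)
    (hT : ∀ (x : H) (i : I), T x i = A i x)
    -- the frame operator S_A = T_A* T_A and its inverse
    (Sinv : H →L[ℂ] H)
    (hSinv : (ContinuousLinearMap.adjoint T ∘L T) ∘L Sinv = 1 ∧
             Sinv ∘L (ContinuousLinearMap.adjoint T ∘L T) = 1)
    -- B is an operator-valued Bessel sequence with analysis operator TB
    (B : I → H →L[ℂ] K) (βB : ℝ)
    (hB : ∀ x : H, ∃ s : ℝ, HasSum (fun i => ‖B i x‖ ^ 2) s ∧ s ≤ βB * ‖x‖ ^ 2)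
    (TB : H →L[ℂ] lp (fun _ : I => K) 2)
    (hTB : ∀ (x : H) (i : I), TB x i = B i x)
    -- TB* (T S⁻¹ + L) = 0 for every L ∈ L_A
    (hOrth : ∀ L : H →L[ℂ] lp (fun _ : I => K) 2,
      ContinuousLinearMap.adjoint L ∘L T = 0 →
      ContinuousLinearMap.adjoint TB ∘L (T ∘L Sinv + L) = 0) :
    ∀ i, B i = 0 :=
  operatorValuedBessel_orthogonal_to_all_duals_eq_zero_general T Sinv hSinv B TB hTB hOrth
end
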